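/- Let f ∈ ℂ((z)) be a formal Laurent series satisfying f(−z)·f(z) = ∂_z f(z). Then there exist c ∈ ℂ and an odd series F ∈ ℂ((z)) (i.e., F(−z) = −F(z)) such that f = c/2 + F and ∂_z F = c²/4 − F². -/

import Mathlib

/-! Split `f` into its even part `E` and odd part `F`. Then `f(−z) = E − F`, so the equation reads
`E² − F² = ∂E + ∂F`. Here `E² − F² − ∂F` is even while `∂E` is odd, so `∂E = 0`: `E` is a
constant `c/2`, and what remains is `∂F = c²/4 − F²`. -/

noncomputable section

/-- The formal derivative `∂_z` of a formal Laurent series. -/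
def lderiv (f : LaurentSeries ℂ) : LaurentSeries ℂ where
  coeff n := ((n + 1 : ℤ) : ℂ) * f.coeff (n + 1)
  isPWO_support' := by
    have h : (Function.support fun n : ℤ => ((n + 1 : ℤ) : ℂ) * f.coeff (n + 1))
        ⊆ (fun n : ℤ => n - 1) '' f.support := by
      intro n hn
      refine ⟨n + 1, ?_, by ring⟩
      intro h0
      simp [HahnSeries.support] at hn
      exact hn.2 h0
    exact (f.isPWO_support.image_of_monotone
      (fun a b hab => by exact sub_le_sub_right hab 1)).mono h

/-- The substitution `z ↦ -z` on formal Laurent series, i.e. `f(z) ↦ f(-z)`: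
the coefficient of `zⁿ` is multiplied by `(-1)ⁿ`. -/
def negSub (f : LaurentSeries ℂ) : LaurentSeries ℂ where
  coeff n := ((-1 : ℂ) ^ n) * f.coeff n
  isPWO_support' := by
    apply f.isPWO_support.mono
    intro n hn h0
    exact hn (by simp [h0])

/-- The divided power derivative `∂^{(k)} = (1/k!)·∂_z^k` on formal Laurent series. -/
def dpow (k : ℕ) (f : LaurentSeries ℂ) : LaurentSeries ℂ :=
  ((k.factorial : ℂ))⁻¹ • lderiv^[k] f

/-- The formal Laurent series `f_c(z) = Σ_{n≥0} (−1)ⁿ·Bₙ·cⁿ·z^{n−1}/n!`, the Laurent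
expansion at `z = 0` of `c·e^{cz}/(e^{cz}−1)`; here `Bₙ` are the Bernoulli numbers,
defined by `x/(eˣ−1) = Σ_{n≥0} Bₙ xⁿ/n!`. -/
def fc (c : ℂ) : LaurentSeries ℂ :=
  (HahnSeries.single (-1 : ℤ) (1 : ℂ)) *
    (PowerSeries.mk fun n => (-1) ^ n * (bernoulli n : ℂ) * c ^ n / (n.factorial : ℂ) :
      PowerSeries ℂ)

/-- `g_c = ∂_z f_c`. -/
def gc (c : ℂ) : LaurentSeries ℂ := lderiv (fc c)

@[simp]
lemma negSub_coeff (f : LaurentSeries ℂ) (n : ℤ) :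
    (negSub f).coeff n = (-1 : ℂ) ^ n * f.coeff n := rfl

@[simp]
lemma lderiv_coeff (f : LaurentSeries ℂ) (n : ℤ) :
    (lderiv f).coeff n = ((n + 1 : ℤ) : ℂ) * f.coeff (n + 1) := rfl

lemma lderiv_add (f g : LaurentSeries ℂ) : lderiv (f + g) = lderiv f + lderiv g := by
  ext n
  simp [mul_add]

lemma lderiv_neg (f : LaurentSeries ℂ) : lderiv (-f) = -lderiv f := by
  ext n
  simp

lemma eq_C_of_lderiv_eq_zero {f : LaurentSeries ℂ} (h : lderiv f = 0) :
    f = HahnSeries.C (f.coeff 0) := by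
  ext n
  rcases eq_or_ne n 0 with rfl | hn
  · simp
  · have hcoeff := congrArg (fun g : LaurentSeries ℂ => g.coeff (n - 1)) h
    simp only [lderiv_coeff, HahnSeries.coeff_zero, sub_add_cancel, mul_eq_zero,
      Int.cast_eq_zero, hn, false_or] at hcoeff
    simp [HahnSeries.coeff_single_of_ne hn, hcoeff]

lemma negSub_support (f : LaurentSeries ℂ) : (negSub f).support = f.support := by
  ext n
  simp [HahnSeries.mem_support, zpow_ne_zero]

lemma negSub_mul (f g : LaurentSeries ℂ) : negSub (f * g) = negSub f * negSub g := by
  ext n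
  have hanti : Finset.antidiagonal (negSub f).isPWO_support (negSub g).isPWO_support n
      = Finset.antidiagonal f.isPWO_support g.isPWO_support n := by
    ext ij
    simp [negSub_support]
  rw [negSub_coeff, HahnSeries.coeff_mul, HahnSeries.coeff_mul, hanti, Finset.mul_sum]
  refine Finset.sum_congr rfl fun ij hij => ?_
  rw [Finset.mem_antidiagonal] at hij
  rw [negSub_coeff, negSub_coeff, ← hij.2.2, zpow_add₀ (by norm_num : (-1 : ℂ) ≠ 0)]
  ring

lemma negSub_C (a : ℂ) : negSub (HahnSeries.C a) = HahnSeries.C a := by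
  ext n
  rcases eq_or_ne n 0 with rfl | h
  · simp
  · simp [HahnSeries.coeff_single_of_ne h]

def negSubRingHom : LaurentSeries ℂ →+* LaurentSeries ℂ where
  toFun := negSub
  map_one' := by rw [← HahnSeries.C_one, negSub_C]
  map_mul' := negSub_mul
  map_zero' := by ext n; simp
  map_add' f g := by ext n; simp [mul_add]

lemma negSub_add (f g : LaurentSeries ℂ) : negSub (f + g) = negSub f + negSub g :=
  map_add negSubRingHom f g

lemma negSub_sub (f g : LaurentSeries ℂ) : negSub (f - g) = negSub f - negSub g :=
  map_sub negSubRingHom f g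

lemma negSub_pow (f : LaurentSeries ℂ) (k : ℕ) : negSub (f ^ k) = negSub f ^ k :=
  map_pow negSubRingHom f k

lemma negSub_smul (a : ℂ) (f : LaurentSeries ℂ) : negSub (a • f) = a • negSub f := by
  ext n
  simp only [negSub_coeff, HahnSeries.coeff_smul, smul_eq_mul]
  ring

lemma negSub_negSub (f : LaurentSeries ℂ) : negSub (negSub f) = f := by
  ext n
  rw [negSub_coeff, negSub_coeff, ← mul_assoc, ← mul_zpow]
  norm_num

lemma negSub_lderiv (f : LaurentSeries ℂ) : negSub (lderiv f) = -lderiv (negSub f) := by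
  ext n
  simp only [negSub_coeff, lderiv_coeff, HahnSeries.coeff_neg,
    zpow_add₀ (by norm_num : (-1 : ℂ) ≠ 0)]
  ring

lemma eq_zero_of_negSub_eq_self_of_negSub_eq_neg {f : LaurentSeries ℂ} (heven : negSub f = f)
    (hodd : negSub f = -f) : f = 0 := by
  have htwo : (2 : ℂ) • f = 0 := by linear_combination (norm := module) hodd - heven
  exact (smul_eq_zero.mp htwo).resolve_left two_ne_zero

lemma exists_even_add_odd (f : LaurentSeries ℂ) :
    ∃ E F : LaurentSeries ℂ, negSub E = E ∧ negSub F = -F ∧ f = E + F := by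
  refine ⟨(2⁻¹ : ℂ) • (f + negSub f), (2⁻¹ : ℂ) • (f - negSub f), ?_, ?_, by module⟩
  · rw [negSub_smul, negSub_add, negSub_negSub, add_comm]
  · rw [negSub_smul, negSub_sub, negSub_negSub]
    module

/-- If `f ∈ ℂ((z))` satisfies `f(−z)·f(z) = ∂_z f(z)` then `f = c/2 + F` for some
constant `c ∈ ℂ` and some odd series `F` (i.e. `F(−z) = −F(z)`) with
`∂_z F = c²/4 − F²`. -/
theorem ode_decomposition (f : LaurentSeries ℂ) (hf : negSub f * f = lderiv f) :
    ∃ (c : ℂ) (F : LaurentSeries ℂ), negSub F = -F ∧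
      f = HahnSeries.C (c / 2) + F ∧
      lderiv F = HahnSeries.C (c ^ 2 / 4) - F ^ 2 := by
  obtain ⟨E, F, hE, hF, rfl⟩ := exists_even_add_odd f
  have hdE : lderiv E = E ^ 2 - F ^ 2 - lderiv F := by
    rw [negSub_add, hE, hF, lderiv_add] at hf
    linear_combination -hf
  have hdE_zero : lderiv E = 0 := by
    refine eq_zero_of_negSub_eq_self_of_negSub_eq_neg ?_ (by rw [negSub_lderiv, hE])
    rw [hdE, negSub_sub, negSub_sub, negSub_pow, negSub_pow, negSub_lderiv, hE, hF, lderiv_neg,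
      neg_neg]
    ring
  obtain ⟨a, rfl⟩ : ∃ a, E = HahnSeries.C a := ⟨_, eq_C_of_lderiv_eq_zero hdE_zero⟩
  refine ⟨2 * a, F, hF, by rw [mul_div_cancel_left₀ _ two_ne_zero], ?_⟩
  rw [hdE_zero, ← map_pow] at hdE
  rw [show (2 * a) ^ 2 / 4 = a ^ 2 by ring]
  linear_combination hdE

end
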